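/- arXiv:2311.18305 — 3 statements merged into one kernel-verified Lean document; each statement's English description precedes it below -/
import Mathlib

section
/- For every x ∈ ℝ^n, the block Kaczmarz iterates converge to the solution: lim_{k→∞} P^k(x) = x*, where x* is the unique point with A x* = b and x* ∈ x + R(Aᵀ). -/
/-!
Each `P_j` is `y ↦ x* + Q_j (y - x*)` with `Q_j` the orthogonal projection onto `N(A_j)`, so
`P^k x - x* = T^k (x - x*)` for `T = Q_p ⋯ Q_1`. The map `T` preserves `N(A)ᗮ = R(Aᵀ)`, and
`‖T v‖ = ‖v‖` forces every `Q_j` to fix `v`, i.e. `v ∈ N(A)`; hence `‖T v‖ < ‖v‖` for nonzero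
`v ∈ R(Aᵀ)`. By compactness of the unit ball, `T` is then a contraction of the finite-dimensional
space `R(Aᵀ)`, so `T^k (x - x*) → 0`.
-/

open scoped RealInnerProductSpace

noncomputable section

abbrev Euc (n : ℕ) := EuclideanSpace ℝ (Fin n)

/-- Intermediate Kaczmarz chain: `chainK Pj x j` is `y_j` with `y_0 = x`, `y_{j+1} = P_{j+1}(y_j)`. -/
def chainK {n p : ℕ} (Pj : Fin p → Euc n → Euc n) (x : Euc n) : ℕ → Euc n
  | 0 => x
  | j + 1 => if h : j < p then Pj ⟨j, h⟩ (chainK Pj x j) else chainK Pj x j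

/-- The block Kaczmarz operator `P = P_p ∘ ⋯ ∘ P_1`. -/
def kacz {n p : ℕ} (Pj : Fin p → Euc n → Euc n) (x : Euc n) : Euc n := chainK Pj x p

/-- `f` sends each point to the (unique) nearest point of `S`. -/
def IsNearestPointMap {n : ℕ} (S : Set (Euc n)) (f : Euc n → Euc n) : Prop :=
  ∀ x, f x ∈ S ∧ ∀ y ∈ S, dist x (f x) ≤ dist x y

/-- The stacked (full) matrix `A` with blocks `A_j`. -/
def fullA {n p : ℕ} (m : Fin p → ℕ)
    (A : ∀ j : Fin p, Euc n →ₗ[ℝ] Euc (m j)) :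
    Euc n →ₗ[ℝ] PiLp 2 (fun j => Euc (m j)) :=
  (WithLp.linearEquiv 2 ℝ (∀ j, Euc (m j))).symm.toLinearMap ∘ₗ LinearMap.pi A

/-- The range of `Aᵀ` for the stacked matrix. -/
def RAT {n p : ℕ} (m : Fin p → ℕ)
    (A : ∀ j : Fin p, Euc n →ₗ[ℝ] Euc (m j)) : Submodule ℝ (Euc n) :=
  LinearMap.range (LinearMap.adjoint (fullA m A))

/-- Orthogonal projection onto a subspace, as an endomorphism. -/
def projSub {n : ℕ} (K : Submodule ℝ (Euc n)) : Euc n →ₗ[ℝ] Euc n :=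
  K.subtype ∘ₗ (K.orthogonalProjectionOnto).toLinearMap

/-- `Tchain m A j = Q_j ∘ ⋯ ∘ Q_1`, with `Q_i` the orthogonal projection onto `N(A_i)`. -/
def Tchain {n p : ℕ} (m : Fin p → ℕ)
    (A : ∀ j : Fin p, Euc n →ₗ[ℝ] Euc (m j)) :
    ℕ → (Euc n →ₗ[ℝ] Euc n)
  | 0 => LinearMap.id
  | j + 1 => if h : j < p then projSub (LinearMap.ker (A ⟨j, h⟩)) ∘ₗ Tchain m A j
             else Tchain m A j

/-- `T = Q_p ∘ ⋯ ∘ Q_1`. -/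
def Tmap {n p : ℕ} (m : Fin p → ℕ)
    (A : ∀ j : Fin p, Euc n →ₗ[ℝ] Euc (m j)) : Euc n →ₗ[ℝ] Euc n :=
  Tchain m A p

/-- `C = I - T`. -/
def Cmap {n p : ℕ} (m : Fin p → ℕ)
    (A : ∀ j : Fin p, Euc n →ₗ[ℝ] Euc (m j)) : Euc n →ₗ[ℝ] Euc n :=
  LinearMap.id - Tmap m A

/-- The Krylov space `K_k(C, r) = span(r, Cr, …, C^{k-1} r)`. -/
def krylov {n : ℕ} (C : Euc n →ₗ[ℝ] Euc n) (r : Euc n) (k : ℕ) : Submodule ℝ (Euc n) :=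
  Submodule.span ℝ {v | ∃ i < k, v = (C ^ i) r}

/-- `z` is the unique minimizer of `‖x - xs‖²` over `S`. -/
def IsUniqueMinimizer {n : ℕ} (xs : Euc n) (S : Set (Euc n)) (z : Euc n) : Prop :=
  z ∈ S ∧ ∀ y ∈ S, y ≠ z → ‖z - xs‖ ^ 2 < ‖y - xs‖ ^ 2

/-- The affine Krylov space `x₀ + K_k(C, r)` as a set. -/
def affKrylov {n : ℕ} (x0 : Euc n) (C : Euc n →ₗ[ℝ] Euc n) (r : Euc n) (k : ℕ) :
    Set (Euc n) :=
  (fun v => x0 + v) '' (krylov C r k : Set (Euc n))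

open Filter Topology Metric

theorem LinearMap.exists_contractingWith_of_norm_lt {E : Type*} [NormedAddCommGroup E]
    [NormedSpace ℝ E] [FiniteDimensional ℝ E] (T : E →ₗ[ℝ] E)
    (hT : ∀ v ≠ 0, ‖T v‖ < ‖v‖) : ∃ c, ContractingWith c T := by
  -- `c` is the maximum of `‖T ·‖` on the closed unit ball, attained by compactness.
  obtain ⟨v₀, hv₀, hmax⟩ := (isCompact_closedBall (0 : E) 1).exists_isMaxOn
    (nonempty_closedBall.2 zero_le_one) T.continuous_of_finiteDimensional.norm.continuousOn
  have hc : ‖T v₀‖ < 1 := by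
    rcases eq_or_ne v₀ 0 with rfl | hne
    · simp
    · exact (hT v₀ hne).trans_le (mem_closedBall_zero_iff.1 hv₀)
  have hbound : ∀ v, ‖T v‖ ≤ ‖T v₀‖ * ‖v‖ := by
    intro v
    rcases eq_or_ne v 0 with rfl | hne
    · simp
    have hv : 0 < ‖v‖ := norm_pos_iff.2 hne
    have hunit : ‖v‖⁻¹ • v ∈ closedBall (0 : E) 1 := by
      rw [mem_closedBall_zero_iff, norm_smul, norm_inv, norm_norm, inv_mul_cancel₀ hv.ne']
    have : ‖T (‖v‖⁻¹ • v)‖ ≤ ‖T v₀‖ := hmax hunit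
    rwa [map_smul, norm_smul, norm_inv, norm_norm, inv_mul_le_iff₀ hv, mul_comm] at this
  exact ⟨_, Real.toNNReal_lt_one.2 hc, AddMonoidHomClass.lipschitz_of_bound T _ hbound⟩

theorem LinearMap.tendsto_iterate_zero_of_norm_lt {E : Type*} [NormedAddCommGroup E]
    [NormedSpace ℝ E] [FiniteDimensional ℝ E] (T : E →ₗ[ℝ] E)
    (hT : ∀ v ≠ 0, ‖T v‖ < ‖v‖) (v : E) :
    Tendsto (fun k => T^[k] v) atTop (𝓝 0) := by
  obtain ⟨c, hc⟩ := T.exists_contractingWith_of_norm_lt hT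
  have := FiniteDimensional.complete ℝ E
  simpa [← hc.fixedPoint_unique (map_zero T)] using hc.tendsto_iterate_fixedPoint v

namespace Submodule

variable {E : Type*} [NormedAddCommGroup E] [InnerProductSpace ℝ E]

theorem starProjection_mem_orthogonal_of_le {K L : Submodule ℝ E} [K.HasOrthogonalProjection]
    [L.HasOrthogonalProjection] (hKL : K ≤ L) {v : E} (hv : v ∈ Kᗮ) :
    L.starProjection v ∈ Kᗮ :=
  orthogonalProjectionOnto_eq_zero_iff.1 <|
    (orthogonalProjectionOnto_starProjection_of_le hKL v).trans
      (orthogonalProjectionOnto_eq_zero_iff.2 hv)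

theorem eq_add_starProjection_of_norm_sub_le (K : Submodule ℝ E) [K.HasOrthogonalProjection]
    {x₀ x y : E} (hy : y - x₀ ∈ K) (hmin : ∀ z, z - x₀ ∈ K → ‖x - y‖ ≤ ‖x - z‖) :
    y = x₀ + K.starProjection (x - x₀) := by
  have hinf : ‖(x - x₀) - (y - x₀)‖ = ⨅ w : K, ‖(x - x₀) - w‖ := by
    refine le_antisymm (le_ciInf fun w => ?_) (ciInf_le ⟨0, ?_⟩ (⟨_, hy⟩ : K))
    · rw [sub_sub_sub_cancel_right, sub_sub]
      exact hmin (x₀ + w) (by simp)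
    · rintro _ ⟨w, rfl⟩
      exact norm_nonneg _
  have := K.eq_starProjection_of_mem_of_inner_eq_zero hy
    ((K.norm_eq_iInf_iff_real_inner_eq_zero hy).1 hinf)
  rw [this, add_sub_cancel]

end Submodule

section BlockKaczmarz

variable {n p : ℕ} {msz : Fin p → ℕ} {A : ∀ j : Fin p, Euc n →ₗ[ℝ] Euc (msz j)}

theorem projSub_apply (K : Submodule ℝ (Euc n)) (v : Euc n) :
    projSub K v = K.starProjection v :=
  rfl

theorem IsNearestPointMap.apply_eq_add_projSub {m : ℕ} {B : Euc n →ₗ[ℝ] Euc m} {c : Euc m}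
    {f : Euc n → Euc n} (hf : IsNearestPointMap {z | B z = c} f) {x₀ : Euc n} (hx₀ : B x₀ = c)
    (x : Euc n) : f x = x₀ + projSub (LinearMap.ker B) (x - x₀) := by
  have hsol : ∀ z, z - x₀ ∈ LinearMap.ker B ↔ B z = c := by
    intro z
    rw [LinearMap.mem_ker, map_sub, hx₀, sub_eq_zero]
  obtain ⟨hfx, hmin⟩ := hf x
  refine (LinearMap.ker B).eq_add_starProjection_of_norm_sub_le ((hsol _).2 hfx) fun z hz => ?_
  simpa only [dist_eq_norm] using hmin z ((hsol z).1 hz)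

theorem chainK_succ {Pj : Fin p → Euc n → Euc n} {x : Euc n} {j : ℕ} (hj : j < p) :
    chainK Pj x (j + 1) = Pj ⟨j, hj⟩ (chainK Pj x j) := by
  simp [chainK, hj]

theorem Tchain_succ {j : ℕ} (hj : j < p) :
    Tchain msz A (j + 1) = projSub (LinearMap.ker (A ⟨j, hj⟩)) ∘ₗ Tchain msz A j := by
  simp [Tchain, hj]

theorem chainK_eq_add_Tchain {b : ∀ j, Euc (msz j)} {Pj : Fin p → Euc n → Euc n}
    (hPj : ∀ j, IsNearestPointMap {z | A j z = b j} (Pj j)) {x₀ : Euc n}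
    (hx₀ : ∀ j, A j x₀ = b j) (x : Euc n) :
    ∀ j ≤ p, chainK Pj x j = x₀ + Tchain msz A j (x - x₀)
  | 0, _ => by simp [chainK, Tchain]
  | j + 1, hj => by
    rw [chainK_succ hj, Tchain_succ hj, chainK_eq_add_Tchain hPj hx₀ x j (Nat.le_of_succ_le hj),
      (hPj _).apply_eq_add_projSub (hx₀ _), add_sub_cancel_left, LinearMap.comp_apply]

theorem kacz_eq_add_Tmap {b : ∀ j, Euc (msz j)} {Pj : Fin p → Euc n → Euc n}
    (hPj : ∀ j, IsNearestPointMap {z | A j z = b j} (Pj j)) {x₀ : Euc n}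
    (hx₀ : ∀ j, A j x₀ = b j) (x : Euc n) :
    kacz Pj x = x₀ + Tmap msz A (x - x₀) :=
  chainK_eq_add_Tchain hPj hx₀ x p le_rfl

theorem norm_Tchain_le (v : Euc n) : ∀ j ≤ p, ‖Tchain msz A j v‖ ≤ ‖v‖
  | 0, _ => by simp [Tchain]
  | j + 1, hj => by
    rw [Tchain_succ hj, LinearMap.comp_apply, projSub_apply]
    exact (Submodule.norm_starProjection_apply_le _ _).trans
      (norm_Tchain_le v j (Nat.le_of_succ_le hj))

theorem Tchain_mem_orthogonal_iInf_ker {v : Euc n} (hv : v ∈ (⨅ i, LinearMap.ker (A i))ᗮ) :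
    ∀ j ≤ p, Tchain msz A j v ∈ (⨅ i, LinearMap.ker (A i))ᗮ
  | 0, _ => by simpa [Tchain] using hv
  | j + 1, hj => by
    rw [Tchain_succ hj, LinearMap.comp_apply, projSub_apply]
    exact Submodule.starProjection_mem_orthogonal_of_le (iInf_le _ _)
      (Tchain_mem_orthogonal_iInf_ker hv j (Nat.le_of_succ_le hj))

theorem mem_ker_of_norm_Tchain_eq {v : Euc n} :
    ∀ j ≤ p, ‖Tchain msz A j v‖ = ‖v‖ →
      Tchain msz A j v = v ∧ ∀ i : Fin p, (i : ℕ) < j → v ∈ LinearMap.ker (A i)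
  | 0, _, _ => ⟨by simp [Tchain], fun i hi => absurd hi (Nat.not_lt_zero _)⟩
  | j + 1, hj, hnorm => by
    rw [Tchain_succ hj, LinearMap.comp_apply, projSub_apply] at hnorm ⊢
    have hprev : ‖Tchain msz A j v‖ = ‖v‖ :=
      le_antisymm (norm_Tchain_le v j (Nat.le_of_succ_le hj))
        (hnorm.symm.le.trans (Submodule.norm_starProjection_apply_le _ _))
    obtain ⟨hfix, hker⟩ := mem_ker_of_norm_Tchain_eq j (Nat.le_of_succ_le hj) hprev
    rw [hfix] at hnorm ⊢
    have hmem : v ∈ LinearMap.ker (A ⟨j, hj⟩) :=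
      (Submodule.mem_iff_norm_starProjection _ v).2 hnorm
    refine ⟨Submodule.starProjection_eq_self_iff.2 hmem, fun i hi => ?_⟩
    rcases Nat.lt_succ_iff_lt_or_eq.1 hi with hi | hi
    · exact hker i hi
    · obtain rfl : i = ⟨j, hj⟩ := Fin.ext hi
      exact hmem

theorem norm_Tmap_lt {v : Euc n} (hv : v ∉ ⨅ i, LinearMap.ker (A i)) :
    ‖Tmap msz A v‖ < ‖v‖ :=
  (norm_Tchain_le v p le_rfl).lt_of_ne fun h =>
    hv (Submodule.mem_iInf _ |>.2 fun i => (mem_ker_of_norm_Tchain_eq p le_rfl h).2 i i.2)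

theorem RAT_eq_orthogonal_iInf_ker : RAT msz A = (⨅ i, LinearMap.ker (A i))ᗮ := by
  rw [RAT, ← LinearMap.orthogonal_ker, fullA, LinearEquiv.ker_comp, LinearMap.ker_pi]

end BlockKaczmarz

theorem stmt5_general
    {n p : ℕ} (msz : Fin p → ℕ)
    (A : ∀ j : Fin p, Euc n →ₗ[ℝ] Euc (msz j))
    (b : ∀ j : Fin p, Euc (msz j))
    (Pj : Fin p → Euc n → Euc n)
    (hPj : ∀ j : Fin p, IsNearestPointMap {z : Euc n | A j z = b j} (Pj j))
    (x xs : Euc n) (hxs : ∀ j, A j xs = b j) (hxs' : xs - x ∈ RAT msz A) :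
    Filter.Tendsto (fun k => (kacz Pj)^[k] x) Filter.atTop (nhds xs) := by
  set W := (⨅ i, LinearMap.ker (A i))ᗮ
  set T := (Tmap msz A).restrict fun v hv => Tchain_mem_orthogonal_iInf_ker hv p le_rfl
  have hx : x - xs ∈ W := by
    rw [RAT_eq_orthogonal_iInf_ker] at hxs'
    simpa using W.neg_mem hxs'
  have hconj : Function.Semiconj (fun w : W => xs + w) T (kacz Pj) := fun w => by
    show xs + Tmap msz A w = kacz Pj (xs + w)
    rw [kacz_eq_add_Tmap hPj hxs, add_sub_cancel_left]
  have hT : ∀ w : W, w ≠ 0 → ‖T w‖ < ‖w‖ := fun w hw =>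
    norm_Tmap_lt fun hmem =>
      hw (by simpa using (Submodule.orthogonal_disjoint _).le_bot ⟨hmem, w.2⟩)
  have hlim : Tendsto (fun k => xs + (T^[k] ⟨x - xs, hx⟩ : Euc n)) atTop (𝓝 (xs + (0 : W))) :=
    (((continuous_const_add xs).comp continuous_subtype_val).tendsto 0).comp
      (T.tendsto_iterate_zero_of_norm_lt hT ⟨x - xs, hx⟩)
  rw [ZeroMemClass.coe_zero, add_zero] at hlim
  refine hlim.congr fun k => ?_
  simpa using hconj.iterate_right k ⟨x - xs, hx⟩

theorem stmt5
    {n p : ℕ} (msz : Fin p → ℕ)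
    (A : ∀ j : Fin p, Euc n →ₗ[ℝ] Euc (msz j))
    (b : ∀ j : Fin p, Euc (msz j))
    (hcons : ∃ z : Euc n, ∀ j, A j z = b j)
    (Pj : Fin p → Euc n → Euc n)
    (hPj : ∀ j : Fin p, IsNearestPointMap {z : Euc n | A j z = b j} (Pj j))
    (x xs : Euc n) (hxs : ∀ j, A j xs = b j) (hxs' : xs - x ∈ RAT msz A) :
    Filter.Tendsto (fun k => (kacz Pj)^[k] x) Filter.atTop (nhds xs) :=
  stmt5_general msz A b Pj hPj x xs hxs hxs'

end
end

section
/- The linear map C := I − T vanishes on N(A) and maps R(Aᵀ) into R(Aᵀ), and its restriction C|_{R(Aᵀ)} : R(Aᵀ) → R(Aᵀ) is a linear bijection (invertible). -/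
open scoped RealInnerProductSpace

noncomputable section

/-!
`T` is a product of orthogonal projections onto the spaces `N(A_j) ⊇ N(A)`, so it fixes `N(A)`
pointwise and, being a product of self-adjoint maps each fixing `N(A)`, preserves inner products
with `N(A)`; hence `C = I - T` kills `N(A)` and takes values in `N(A)ᗮ = R(Aᵀ)`. Each projection
is a contraction that fixes exactly its range, so `T x = x` forces `x ∈ N(A_j)` for all `j`, i.e.
`ker C = N(A)`. Thus `C` is injective on `R(Aᵀ)`, and bijective there by finite dimension.
-/

namespace Submodule

variable {𝕜 E : Type*} [RCLike 𝕜] [NormedAddCommGroup E] [InnerProductSpace 𝕜 E]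
  (K : Submodule 𝕜 E) [K.HasOrthogonalProjection]

theorem eq_of_starProjection_eq_of_norm_le {x y : E} (hxy : K.starProjection y = x)
    (hle : ‖y‖ ≤ ‖x‖) : y = x := by
  have hy : y ∈ K := by
    rw [K.mem_iff_norm_starProjection, hxy]
    exact le_antisymm (hxy ▸ K.norm_starProjection_apply_le y) hle
  rwa [K.starProjection_eq_self_iff.mpr hy] at hxy

end Submodule

section Kaczmarz

variable {n p : ℕ} (m : Fin p → ℕ) (A : ∀ j : Fin p, Euc n →ₗ[ℝ] Euc (m j))

theorem Tchain_succ_apply (j : ℕ) (x : Euc n) :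
    Tchain m A (j + 1) x =
      if h : j < p then (LinearMap.ker (A ⟨j, h⟩)).starProjection (Tchain m A j x)
      else Tchain m A j x := by
  rw [Tchain]
  split_ifs <;> rfl

theorem mem_ker_fullA_iff {x : Euc n} : x ∈ LinearMap.ker (fullA m A) ↔ ∀ j, A j x = 0 := by
  simp [fullA, funext_iff]

theorem Tchain_apply_of_mem_ker {x : Euc n} (hx : x ∈ LinearMap.ker (fullA m A)) (k : ℕ) :
    Tchain m A k x = x := by
  induction k with
  | zero => rfl
  | succ j ih =>
    rw [Tchain_succ_apply]
    split_ifs with h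
    · rw [ih, Submodule.starProjection_eq_self_iff]
      exact (mem_ker_fullA_iff m A).mp hx _
    · exact ih

theorem inner_Tchain_apply_of_mem_ker (x : Euc n) {z : Euc n}
    (hz : z ∈ LinearMap.ker (fullA m A)) (k : ℕ) : ⟪Tchain m A k x, z⟫ = ⟪x, z⟫ := by
  induction k with
  | zero => rfl
  | succ j ih =>
    rw [Tchain_succ_apply]
    split_ifs with h
    · rw [Submodule.inner_starProjection_left_eq_right,
        Submodule.starProjection_eq_self_iff.mpr ((mem_ker_fullA_iff m A).mp hz _), ih]
    · exact ih

theorem norm_Tchain_apply_le (x : Euc n) (k : ℕ) : ‖Tchain m A k x‖ ≤ ‖x‖ := by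
  induction k with
  | zero => rfl
  | succ j ih =>
    rw [Tchain_succ_apply]
    split_ifs
    · exact (Submodule.norm_starProjection_apply_le _ _).trans ih
    · exact ih

theorem apply_eq_zero_of_Tchain_apply_eq_self {x : Euc n} {k : ℕ} (hx : Tchain m A k x = x)
    (j : Fin p) (hj : (j : ℕ) < k) : A j x = 0 := by
  induction k with
  | zero => omega
  | succ k ih =>
    rw [Tchain_succ_apply] at hx
    split_ifs at hx with hk
    · have hfix : Tchain m A k x = x :=
        Submodule.eq_of_starProjection_eq_of_norm_le _ hx (norm_Tchain_apply_le m A x k)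
      rcases Nat.lt_succ_iff_lt_or_eq.mp hj with hj | hj
      · exact ih hfix hj
      · rw [hfix, Submodule.starProjection_eq_self_iff] at hx
        exact (Fin.ext hj : j = ⟨k, hk⟩) ▸ hx
    · exact ih hx (by omega)

theorem Cmap_apply_eq_zero_iff {x : Euc n} :
    Cmap m A x = 0 ↔ x ∈ LinearMap.ker (fullA m A) := by
  rw [Cmap, LinearMap.sub_apply, LinearMap.id_apply, sub_eq_zero, eq_comm, Tmap]
  exact ⟨fun hx => (mem_ker_fullA_iff m A).mpr fun j =>
      apply_eq_zero_of_Tchain_apply_eq_self m A hx j j.isLt,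
    fun hx => Tchain_apply_of_mem_ker m A hx p⟩

theorem Cmap_apply_mem_RAT (x : Euc n) : Cmap m A x ∈ RAT m A := by
  rw [RAT, ← LinearMap.orthogonal_ker, Submodule.mem_orthogonal']
  intro z hz
  rw [Cmap, Tmap, LinearMap.sub_apply, LinearMap.id_apply, inner_sub_left,
    inner_Tchain_apply_of_mem_ker m A x hz, sub_self]

theorem injective_Cmap_restrict_RAT (h : ∀ x ∈ RAT m A, Cmap m A x ∈ RAT m A) :
    Function.Injective ((Cmap m A).restrict h) := by
  rw [← LinearMap.ker_eq_bot, LinearMap.ker_eq_bot']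
  rintro ⟨x, hx⟩ hCx
  have hker : x ∈ LinearMap.ker (fullA m A) :=
    (Cmap_apply_eq_zero_iff m A).mp (congrArg Subtype.val hCx)
  rw [RAT, ← LinearMap.orthogonal_ker] at hx
  exact Subtype.ext (Submodule.disjoint_def.mp (Submodule.orthogonal_disjoint _) x hker hx)

end Kaczmarz

theorem stmt9
    {n p : ℕ} (msz : Fin p → ℕ)
    (A : ∀ j : Fin p, Euc n →ₗ[ℝ] Euc (msz j)) :
    (∀ x ∈ LinearMap.ker (fullA msz A), Cmap msz A x = 0) ∧
    ∃ h : ∀ x ∈ RAT msz A, Cmap msz A x ∈ RAT msz A,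
      Function.Bijective ((Cmap msz A).restrict h) := by
  refine ⟨fun x hx => (Cmap_apply_eq_zero_iff msz A).mpr hx,
    fun x _ => Cmap_apply_mem_RAT msz A x, ?_⟩
  have hinj := injective_Cmap_restrict_RAT msz A fun x _ => Cmap_apply_mem_RAT msz A x
  exact ⟨hinj, LinearMap.injective_iff_surjective.mp hinj⟩

end
end

section
/- Let x_0 ∈ ℝ^n, let x* be the unique point with A x* = b and x* ∈ x_0 + R(Aᵀ), let r_0 := g − C x_0, and let d ≤ n be such that x* ∈ x_0 + K_d(C,r_0). Let q_1,…,q_d ∈ ℝ^n be orthonormal vectors such that (q_1,…,q_k) is a basis of K_k(C,r_0) for every k ∈ {1,…,d}, and set μ_i := ⟨x* − x_0, q_i⟩. For k ∈ {0,…,d−1}, let x_k be the unique minimizer of ‖x − x*‖² over x_0 + K_k(C,r_0), e_k := x* − x_k, r_k := g − C x_k, and suppose r_k = Σ_{i=1}^{k+1} u_{i,k+1} q_i with coefficients u_{i,k+1} ∈ ℝ. Then u_{k+1,k+1} · μ_{k+1} = ⟨e_k, r_k⟩; in particular, whenever u_{k+1,k+1} ≠ 0, the coordinate μ_{k+1}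 = ⟨x* − x_0, q_{k+1}⟩ of the unknown solution equals u_{k+1,k+1}^{-1} ⟨e_k, r_k⟩. -/
open scoped RealInnerProductSpace

/-
The iterate `x_k = x₀ + w` minimizes the distance to `x*` over `x₀ + K_k`, so its error `e_k`
is orthogonal to `K_k = span(q_1, …, q_k)`. Pairing `e_k` with `r_k = ∑_{i ≤ k+1} u_{i,k+1} q_i`
therefore only sees the last term, and `⟨e_k, q_{k+1}⟩ = ⟨x* - x₀, q_{k+1}⟩` because the
correction `w ∈ K_k` is orthogonal to `q_{k+1}` as well.
-/

section InnerProductSpace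

variable {E : Type*} [NormedAddCommGroup E] [InnerProductSpace ℝ E]

theorem Submodule.inner_sub_eq_zero_of_forall_norm_le (K : Submodule ℝ E) {u v : E}
    (hv : v ∈ K) (hmin : ∀ w ∈ K, ‖u - v‖ ≤ ‖u - w‖) : ∀ w ∈ K, ⟪u - v, w⟫ = 0 := by
  rw [← norm_eq_iInf_iff_real_inner_eq_zero K hv]
  exact le_antisymm (le_ciInf fun w => hmin w w.2)
    (ciInf_le ⟨0, Set.forall_mem_range.2 fun _ => norm_nonneg _⟩ (⟨v, hv⟩ : K))

theorem Orthonormal.inner_eq_zero_of_mem_span_image {ι : Type*} {q : ι → E}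
    (hq : Orthonormal ℝ q) {s : Set ι} {i : ι} (hi : i ∉ s) {v : E}
    (hv : v ∈ Submodule.span ℝ (q '' s)) : ⟪v, q i⟫ = 0 := by
  obtain ⟨l, hl, rfl⟩ := Finsupp.mem_span_image_iff_linearCombination ℝ |>.1 hv
  exact hq.inner_finsupp_eq_zero hi hl

theorem inner_sum_filter_lt_succ {d : ℕ} (e : E) (q : Fin d → E) (u : Fin d → ℝ) {k : ℕ}
    (hk : k < d) (he : ∀ i : Fin d, (i : ℕ) < k → ⟪e, q i⟫ = 0) :
    ⟪e, ∑ i ∈ Finset.univ.filter (fun i : Fin d => (i : ℕ) < k + 1), u i • q i⟫ =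
      u ⟨k, hk⟩ * ⟪e, q ⟨k, hk⟩⟫ := by
  rw [inner_sum, Finset.sum_eq_single_of_mem ⟨k, hk⟩ (by simp), real_inner_smul_right]
  intro i hi hne
  have hik : (i : ℕ) < k := by
    rw [Finset.mem_filter] at hi
    exact lt_of_le_of_ne (Nat.lt_succ_iff.1 hi.2) fun h => hne (Fin.ext h)
  rw [real_inner_smul_right, he i hik, mul_zero]

end InnerProductSpace

@[simp]
theorem krylov_zero {n : ℕ} (C : Euc n →ₗ[ℝ] Euc n) (r : Euc n) : krylov C r 0 = ⊥ := by
  simp [krylov]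

theorem IsUniqueMinimizer.inner_eq_zero {n : ℕ} {xs x0 xk : Euc n} {K : Submodule ℝ (Euc n)}
    (h : IsUniqueMinimizer xs ((fun v => x0 + v) '' (K : Set (Euc n))) xk) :
    ∀ v ∈ K, ⟪xs - xk, v⟫ = 0 := by
  obtain ⟨⟨w, hw, rfl⟩, hlt⟩ := h
  have hnorm : ∀ y, ‖x0 + y - xs‖ = ‖(xs - x0) - y‖ := fun y => by
    rw [← norm_neg]; congr 1; abel
  have hmin : ∀ w' ∈ K, ‖(xs - x0) - w‖ ≤ ‖(xs - x0) - w'‖ := by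
    intro w' hw'
    rcases eq_or_ne (x0 + w') (x0 + w) with heq | hne
    · rw [add_left_cancel heq]
    · have := hlt _ ⟨w', hw', rfl⟩ hne
      rw [hnorm, hnorm] at this
      exact (pow_lt_pow_iff_left₀ (norm_nonneg _) (norm_nonneg _) two_ne_zero).1 this |>.le
  simpa only [sub_sub] using K.inner_sub_eq_zero_of_forall_norm_le hw hmin

theorem stmt18_general
    {n p : ℕ} (msz : Fin p → ℕ)
    (A : ∀ j : Fin p, Euc n →ₗ[ℝ] Euc (msz j))
    (Pj : Fin p → Euc n → Euc n)
    (x0 xs : Euc n)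
    (d : ℕ)
    (q : Fin d → Euc n) (hq : Orthonormal ℝ q)
    (hbasis : ∀ k, 1 ≤ k → k ≤ d →
      krylov (Cmap msz A) (kacz Pj (0 : Euc n) - Cmap msz A x0) k =
        Submodule.span ℝ (q '' {i : Fin d | (i : ℕ) < k}))
    (k : ℕ) (hk : k < d) (xk : Euc n)
    (hmin : IsUniqueMinimizer xs
      (affKrylov x0 (Cmap msz A) (kacz Pj (0 : Euc n) - Cmap msz A x0) k) xk)
    (rk : Euc n)
    (u : Fin d → ℝ)
    (hu : rk = ∑ i ∈ Finset.univ.filter (fun i : Fin d => (i : ℕ) < k + 1), u i • q i) :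
    u ⟨k, hk⟩ * ⟪xs - x0, q ⟨k, hk⟩⟫ = ⟪xs - xk, rk⟫ ∧
    (u ⟨k, hk⟩ ≠ 0 →
      ⟪xs - x0, q ⟨k, hk⟩⟫ = (u ⟨k, hk⟩)⁻¹ * ⟪xs - xk, rk⟫) := by
  have hK : krylov (Cmap msz A) (kacz Pj (0 : Euc n) - Cmap msz A x0) k =
      Submodule.span ℝ (q '' {i : Fin d | (i : ℕ) < k}) := by
    rcases k.eq_zero_or_pos with rfl | hk0
    · simp
    · exact hbasis k hk0 hk.le
  have hperp := hmin.inner_eq_zero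
  obtain ⟨w, hw, rfl⟩ := hmin.1
  have hwq : ⟪w, q ⟨k, hk⟩⟫ = 0 :=
    hq.inner_eq_zero_of_mem_span_image (lt_irrefl k) (hK ▸ hw : w ∈ _)
  have hmu : ⟪xs - (x0 + w), q ⟨k, hk⟩⟫ = ⟪xs - x0, q ⟨k, hk⟩⟫ := by
    rw [← sub_sub, inner_sub_left, hwq, sub_zero]
  have hmain : ⟪xs - (x0 + w), rk⟫ = u ⟨k, hk⟩ * ⟪xs - x0, q ⟨k, hk⟩⟫ := by
    rw [hu, inner_sum_filter_lt_succ _ q u hk fun i hi =>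
      hperp _ (hK ▸ Submodule.subset_span ⟨i, hi, rfl⟩), hmu]
  refine ⟨hmain.symm, fun hu0 => ?_⟩
  rw [hmain, inv_mul_cancel_left₀ hu0]

theorem stmt18
    {n p : ℕ} (msz : Fin p → ℕ)
    (A : ∀ j : Fin p, Euc n →ₗ[ℝ] Euc (msz j))
    (b : ∀ j : Fin p, Euc (msz j))
    (hcons : ∃ z : Euc n, ∀ j, A j z = b j)
    (Pj : Fin p → Euc n → Euc n)
    (hPj : ∀ j : Fin p, IsNearestPointMap {z : Euc n | A j z = b j} (Pj j))
    (x0 xs : Euc n) (hxs : ∀ j, A j xs = b j) (hxs' : xs - x0 ∈ RAT msz A)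
    (d : ℕ) (hd : d ≤ n)
    (hxsd : xs - x0 ∈ krylov (Cmap msz A) (kacz Pj (0 : Euc n) - Cmap msz A x0) d)
    (q : Fin d → Euc n) (hq : Orthonormal ℝ q)
    (hbasis : ∀ k, 1 ≤ k → k ≤ d →
      krylov (Cmap msz A) (kacz Pj (0 : Euc n) - Cmap msz A x0) k =
        Submodule.span ℝ (q '' {i : Fin d | (i : ℕ) < k}))
    (k : ℕ) (hk : k < d) (xk : Euc n)
    (hmin : IsUniqueMinimizer xs
      (affKrylov x0 (Cmap msz A) (kacz Pj (0 : Euc n) - Cmap msz A x0) k) xk)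
    (rk : Euc n) (hrk : rk = kacz Pj (0 : Euc n) - Cmap msz A xk)
    (u : Fin d → ℝ)
    (hu : rk = ∑ i ∈ Finset.univ.filter (fun i : Fin d => (i : ℕ) < k + 1), u i • q i) :
    u ⟨k, hk⟩ * ⟪xs - x0, q ⟨k, hk⟩⟫ = ⟪xs - xk, rk⟫ ∧
    (u ⟨k, hk⟩ ≠ 0 →
      ⟪xs - x0, q ⟨k, hk⟩⟫ = (u ⟨k, hk⟩)⁻¹ * ⟪xs - xk, rk⟫) :=
  stmt18_general msz A Pj x0 xs d q hq hbasis k hk xk hmin rk u hu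
end
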